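/- arXiv:2603.15336 — 2 statements merged into one kernel-verified Lean document; each statement's English description precedes it below -/
import Mathlib

section
/- For all q in [0,1] and p in (0,1), the Bernoulli KL divergence satisfies kl(q,p) >= q*ln(1/p) - ln(2), where kl(q,p) = q*ln(q/p) + (1-q)*ln((1-q)/(1-p)). -/
/-- Entropy bound: `q·ln q + (1-q)·ln(1-q) ≥ -ln 2` for `0 < q < 1`. -/
lemma entropy_ge_neg_log_two (q : ℝ) (h0 : 0 < q) (h1 : q < 1) :
    q * Real.log q + (1 - q) * Real.log (1 - q) ≥ - Real.log 2 := by
  have h1' : (0:ℝ) < 1 - q := by linarith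
  have A := Real.log_le_sub_one_of_pos (show (0:ℝ) < 1/(2*q) by positivity)
  have B := Real.log_le_sub_one_of_pos (show (0:ℝ) < 1/(2*(1-q)) by positivity)
  rw [one_div, Real.log_inv] at A B
  have lA : Real.log (2*q) ≥ 1 - (2*q)⁻¹ := by linarith
  have lB : Real.log (2*(1-q)) ≥ 1 - (2*(1-q))⁻¹ := by linarith
  have eA : Real.log (2*q) = Real.log 2 + Real.log q :=
    Real.log_mul two_ne_zero h0.ne'
  have eB : Real.log (2*(1-q)) = Real.log 2 + Real.log (1-q) :=
    Real.log_mul two_ne_zero h1'.ne'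
  have hA : q * Real.log (2*q) ≥ q - 1/2 := by
    have : q * (1 - (2*q)⁻¹) = q - 1/2 := by field_simp
    nlinarith [mul_le_mul_of_nonneg_left lA.le h0.le]
  have hB : (1-q) * Real.log (2*(1-q)) ≥ (1-q) - 1/2 := by
    have : (1-q) * (1 - (2*(1-q))⁻¹) = (1-q) - 1/2 := by field_simp
    nlinarith [mul_le_mul_of_nonneg_left lB.le h1'.le]
  rw [eA] at hA
  rw [eB] at hB
  nlinarith

/-- Bernoulli KL divergence: `kl(q,p) ≥ q·ln(1/p) − ln 2` for `q ∈ [0,1]`, `p ∈ (0,1)`.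
Lean's `Real.log 0 = 0` implements the conventions `0·ln 0 = 0` and `0·ln(0/x) = 0`. -/
theorem bernoulli_kl_ge (q p : ℝ) (hq0 : 0 ≤ q) (hq1 : q ≤ 1) (hp0 : 0 < p) (hp1 : p < 1) :
    q * Real.log (q / p) + (1 - q) * Real.log ((1 - q) / (1 - p)) ≥
      q * Real.log (1 / p) - Real.log 2 := by
  have hp1' : (0:ℝ) < 1 - p := by linarith
  have hlog2 : (0:ℝ) < Real.log 2 := Real.log_pos (by norm_num)
  have hlogp1 : Real.log (1 - p) ≤ 0 := Real.log_nonpos (by linarith) (by linarith)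
  rcases eq_or_lt_of_le hq0 with h0 | h0
  · subst h0
    simp only [zero_mul, sub_zero, one_mul, zero_add, ge_iff_le]
    rw [Real.log_div one_ne_zero hp1'.ne']
    simp only [Real.log_one, zero_sub]
    linarith
  rcases eq_or_lt_of_le hq1 with h1 | h1
  · subst h1
    simp only [sub_self, zero_mul, add_zero, one_mul, zero_div, Real.log_zero, ge_iff_le]
    linarith
  have h1' : (0:ℝ) < 1 - q := by linarith
  have e1 : Real.log (q / p) = Real.log q - Real.log p := Real.log_div h0.ne' hp0.ne'
  have e2 : Real.log ((1-q)/(1-p)) = Real.log (1-q) - Real.log (1-p) :=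
    Real.log_div h1'.ne' hp1'.ne'
  have e3 : Real.log (1/p) = - Real.log p := by rw [one_div, Real.log_inv]
  have ent := entropy_ge_neg_log_two q h0 h1
  rw [e1, e2, e3]
  nlinarith [mul_nonpos_of_nonneg_of_nonpos h1'.le hlogp1]
end

section
/- Let E_1, ..., E_T be events adapted to a filtration F_0 subset F_1 subset ... subset F_{T-1}, such that P(E_t^c | F_{t-1}) <= pbar almost surely for each t, where 0 < pbar < 1/4. Then P(sum_{t=1}^T 1_{E_t^c} >= T/4) <= exp(-T * kl(1/4, pbar)), where kl denotes the Bernoulli KL divergence. -/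
open MeasureTheory ProbabilityTheory

/-- Chernoff bound for adapted events with conditional failure probability at most
`p̄ < 1/4`: `P(∑_{t=1}^T 1_{E_tᶜ} ≥ T/4) ≤ exp(−T · kl(1/4, p̄))`. -/
theorem adapted_events_chernoff {Ω : Type*} {m0 : MeasurableSpace Ω} (μ : Measure Ω)
    [IsProbabilityMeasure μ] (T : ℕ) (hT : 1 ≤ T)
    (ℱ : Filtration ℕ m0) (E : ℕ → Set Ω) (hE : ∀ t, MeasurableSet[ℱ t] (E t))
    (pbar : ℝ) (hp0 : 0 < pbar) (hp : pbar < 1 / 4)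
    (hcond : ∀ t, 1 ≤ t → t ≤ T →
      ∀ᵐ ω ∂μ, (μ[Set.indicator (E t)ᶜ (fun _ => (1 : ℝ)) | ℱ (t - 1)]) ω ≤ pbar) :
    (μ {ω | (T : ℝ) / 4 ≤
        ∑ t ∈ Finset.Icc 1 T, Set.indicator (E t)ᶜ (fun _ => (1 : ℝ)) ω}).toReal ≤
      Real.exp (-(T : ℝ) *
        ((1 / 4) * Real.log ((1 / 4) / pbar) +
          (3 / 4) * Real.log ((3 / 4) / (1 - pbar)))) := by
  have h1p : (0:ℝ) < 1 - pbar := by linarith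
  set X : ℕ → Ω → ℝ := fun t => Set.indicator (E t)ᶜ (fun _ => (1 : ℝ)) with hXdef
  set l : ℝ := Real.log ((1/4) * (1 - pbar) / (pbar * (3/4))) with hldef
  have hargpos : (0:ℝ) < (1/4) * (1 - pbar) / (pbar * (3/4)) := by positivity
  have hexpl : Real.exp l = (1/4) * (1 - pbar) / (pbar * (3/4)) := Real.exp_log hargpos
  have hlpos : 0 < l := Real.log_pos (by rw [lt_div_iff₀ (by positivity)]; nlinarith)
  have hc : 0 ≤ Real.exp l - 1 := by linarith [Real.one_le_exp hlpos.le]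
  set r : ℝ := 1 - pbar + pbar * Real.exp l with hrdef
  have hrpos : 0 < r := by nlinarith [Real.exp_pos l]
  have hXmeas : ∀ t, StronglyMeasurable[ℱ t] (X t) :=
    fun t => stronglyMeasurable_const.indicator (hE t).compl
  have hX0 : ∀ t ω, 0 ≤ X t ω := fun t ω => Set.indicator_nonneg (fun _ _ => zero_le_one) ω
  have hX1 : ∀ t ω, X t ω ≤ 1 := by
    intro t ω
    by_cases h : ω ∈ (E t)ᶜ
    · simp [hXdef, Set.indicator_of_mem h]
    · simp [hXdef, Set.indicator_of_notMem h]
  have hXexp : ∀ t ω, Real.exp (l * X t ω) = 1 + (Real.exp l - 1) * X t ω := by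
    intro t ω
    by_cases h : ω ∈ (E t)ᶜ
    · simp [hXdef, Set.indicator_of_mem h]
    · simp [hXdef, Set.indicator_of_notMem h]
  have hXint : ∀ t, Integrable (X t) μ :=
    fun t => (integrable_const (1:ℝ)).indicator (ℱ.le t _ (hE t).compl)
  set S : ℕ → Ω → ℝ := fun n ω => ∑ t ∈ Finset.Icc 1 n, X t ω with hSdef
  have hSmeas : ∀ n, StronglyMeasurable[ℱ n] (S n) := by
    intro n
    apply Finset.stronglyMeasurable_fun_sum
    intro t ht
    exact (hXmeas t).mono (ℱ.mono (Finset.mem_Icc.1 ht).2)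
  set f : ℕ → Ω → ℝ := fun n ω => Real.exp (l * S n ω) with hfdef
  have hfmeas : ∀ n, StronglyMeasurable[ℱ n] (f n) :=
    fun n => Real.continuous_exp.comp_stronglyMeasurable ((hSmeas n).const_mul l)
  have hf0 : ∀ n ω, 0 < f n ω := fun n ω => Real.exp_pos _
  have hSub : ∀ n ω, S n ω ≤ n := by
    intro n ω
    calc S n ω ≤ ∑ t ∈ Finset.Icc 1 n, (1:ℝ) := Finset.sum_le_sum (fun t _ => hX1 t ω)
    _ = n := by simp
  have hfub : ∀ n ω, f n ω ≤ Real.exp (l * n) := by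
    intro n ω
    exact Real.exp_le_exp.2 (mul_le_mul_of_nonneg_left (hSub n ω) hlpos.le)
  have hfint : ∀ n, Integrable (f n) μ := by
    intro n
    refine (integrable_const (Real.exp (l * n))).mono'
      ((hfmeas n).mono (ℱ.le n)).aestronglyMeasurable
      (ae_of_all _ fun ω => ?_)
    rw [Real.norm_eq_abs, abs_of_pos (hf0 n ω)]
    exact hfub n ω
  have hfbdd : ∀ n, ∃ C, ∀ ω, ‖f n ω‖ ≤ C := by
    intro n
    exact ⟨Real.exp (l * n), fun ω => by
      rw [Real.norm_eq_abs, abs_of_pos (hf0 n ω)]; exact hfub n ω⟩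
  -- key induction
  have key : ∀ n, n ≤ T → ∫ ω, f n ω ∂μ ≤ r ^ n := by
    intro n
    induction n with
    | zero =>
      intro _
      have : ∀ ω, f 0 ω = 1 := by intro ω; simp [hfdef, hSdef]
      simp [this]
    | succ n ih =>
      intro hn1
      have ihT := ih (le_trans (Nat.le_succ n) hn1)
      have hsplit : ∀ ω, f (n+1) ω = f n ω + (Real.exp l - 1) * (f n ω * X (n+1) ω) := by
        intro ω
        have hS : S (n+1) ω = S n ω + X (n+1) ω :=
          Finset.sum_Icc_succ_top (Nat.succ_le_succ (Nat.zero_le n)) _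
        have : f (n+1) ω = f n ω * Real.exp (l * X (n+1) ω) := by
          rw [hfdef]; simp only []
          rw [hS, mul_add, Real.exp_add]
        rw [this, hXexp]; ring
      have hfXint : Integrable (fun ω => f n ω * X (n+1) ω) μ :=
        by obtain ⟨C, hC⟩ := hfbdd n; exact (hXint (n+1)).bdd_mul ((hfmeas n).mono (ℱ.le n)).aestronglyMeasurable (ae_of_all _ hC)
      -- integral of product via conditional expectation
      have hprod : ∫ ω, f n ω * X (n+1) ω ∂μ ≤ pbar * ∫ ω, f n ω ∂μ := by
        have hce : μ[(fun ω => f n ω) * (fun ω => X (n+1) ω) | ℱ n]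
            =ᵐ[μ] (fun ω => f n ω) * μ[fun ω => X (n+1) ω | ℱ n] :=
          condExp_mul_of_stronglyMeasurable_left (hfmeas n) hfXint (hXint (n+1))
        have h1 : ∫ ω, f n ω * X (n+1) ω ∂μ
            = ∫ ω, f n ω * (μ[fun ω => X (n+1) ω | ℱ n]) ω ∂μ := by
          rw [← integral_condExp (ℱ.le n) (f := fun ω => f n ω * X (n+1) ω)]
          exact integral_congr_ae hce
        rw [h1]
        have hcint : Integrable (fun ω => f n ω * (μ[fun ω => X (n+1) ω | ℱ n]) ω) μ :=
          by obtain ⟨C, hC⟩ := hfbdd n; exact integrable_condExp.bdd_mul ((hfmeas n).mono (ℱ.le n)).aestronglyMeasurable (ae_of_all _ hC)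
        have h2 : ∫ ω, f n ω * (μ[fun ω => X (n+1) ω | ℱ n]) ω ∂μ
            ≤ ∫ ω, f n ω * pbar ∂μ := by
          refine integral_mono_ae hcint ((hfint n).mul_const pbar) ?_
          have h3 := hcond (n+1) (Nat.succ_le_succ (Nat.zero_le n)) hn1
          simp only [Nat.add_sub_cancel] at h3
          filter_upwards [h3] with ω hω
          exact mul_le_mul_of_nonneg_left hω (hf0 n ω).le
        calc _ ≤ ∫ ω, f n ω * pbar ∂μ := h2
        _ = pbar * ∫ ω, f n ω ∂μ := by rw [integral_mul_const]; ring
      have hintpos : 0 ≤ ∫ ω, f n ω ∂μ := integral_nonneg (fun ω => (hf0 n ω).le)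
      calc ∫ ω, f (n+1) ω ∂μ
          = ∫ ω, (f n ω + (Real.exp l - 1) * (f n ω * X (n+1) ω)) ∂μ := by
            exact integral_congr_ae (ae_of_all _ hsplit)
        _ = ∫ ω, f n ω ∂μ + (Real.exp l - 1) * ∫ ω, f n ω * X (n+1) ω ∂μ := by
            rw [integral_add (hfint n) (hfXint.const_mul _), integral_const_mul]
        _ ≤ ∫ ω, f n ω ∂μ + (Real.exp l - 1) * (pbar * ∫ ω, f n ω ∂μ) := by
            nlinarith [hprod, mul_le_mul_of_nonneg_left hprod hc]
        _ = r * ∫ ω, f n ω ∂μ := by rw [hrdef]; ring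
        _ ≤ r * r ^ n := mul_le_mul_of_nonneg_left ihT hrpos.le
        _ = r ^ (n+1) := by ring
  -- Markov step
  set ε : ℝ := Real.exp (l * (T / 4)) with hεdef
  have hεpos : 0 < ε := Real.exp_pos _
  have hsub : {ω | (T : ℝ) / 4 ≤ S T ω} ⊆ {ω | ε ≤ f T ω} := by
    intro ω hω
    exact Real.exp_le_exp.2 (mul_le_mul_of_nonneg_left hω hlpos.le)
  have hmono : (μ {ω | (T : ℝ) / 4 ≤ S T ω}).toReal ≤ (μ {ω | ε ≤ f T ω}).toReal :=
    ENNReal.toReal_mono (measure_ne_top μ _) (measure_mono hsub)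
  have hmarkov : ε * (μ {ω | ε ≤ f T ω}).toReal ≤ ∫ ω, f T ω ∂μ :=
    mul_meas_ge_le_integral_of_nonneg (ae_of_all _ fun ω => (hf0 T ω).le) (hfint T) ε
  have hfinal : (μ {ω | (T : ℝ) / 4 ≤ S T ω}).toReal ≤ r ^ T / ε := by
    rw [le_div_iff₀ hεpos]
    calc (μ {ω | (T : ℝ) / 4 ≤ S T ω}).toReal * ε
        ≤ (μ {ω | ε ≤ f T ω}).toReal * ε :=
          mul_le_mul_of_nonneg_right hmono hεpos.le
      _ = ε * (μ {ω | ε ≤ f T ω}).toReal := mul_comm _ _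
      _ ≤ ∫ ω, f T ω ∂μ := hmarkov
      _ ≤ r ^ T := key T le_rfl
  -- final algebra
  have halg : r ^ T / ε = Real.exp (-(T : ℝ) *
      ((1 / 4) * Real.log ((1 / 4) / pbar) +
        (3 / 4) * Real.log ((3 / 4) / (1 - pbar)))) := by
    have hr : r = (1 - pbar) / (3/4) := by
      rw [hrdef, hexpl]; field_simp; ring
    have hlogr : Real.log r = - Real.log ((3/4) / (1 - pbar)) := by
      rw [hr, ← Real.log_inv]
      congr 1
      rw [inv_div]
    have hl2 : l = Real.log ((1/4) / pbar) - Real.log ((3/4) / (1 - pbar)) := by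
      rw [hldef, ← Real.log_div (by positivity) (by positivity)]
      congr 1
      field_simp
    have hrT : r ^ T = Real.exp ((T : ℝ) * Real.log r) := by
      rw [Real.exp_nat_mul, Real.exp_log hrpos]
    rw [hrT, hεdef, ← Real.exp_sub]
    congr 1
    rw [hlogr, hl2]
    ring
  rw [← halg]
  exact hfinal
end
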